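/- Let S be an n×n row-stochastic matrix and let {C_1,…,C_k} be a partition of {1,…,n} into k nonempty clusters with BCM matrix Y and normalization Ŷ = Y(YᵀY)^{-1/2}. Then the multi-hop conductance Φ({C_1,…,C_k}) = (1/k)·Σ_{C} (1/|C|)·Σ_{i∈C} Σ_{j∉C} S[i,j] satisfies Φ({C_1,…,C_k}) = 1 − (1/k)·trace(Ŷᵀ S Ŷ). -/

import Mathlib

/-!
Scaling the cluster indicator `Y` by `|C|^{-1/2}` makes the `t`-th diagonal entry of `ŶᵀSŶ` the
mean mass `|C_t|⁻¹ ∑_{i,j ∈ C_t} S i j` that rows of `C_t` keep inside `C_t`. Rows of `S` sum to one,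
so the mass leaving `C_t` is one minus that, and averaging over the `k` clusters gives `Φ = 1 - Ψ`.
-/

open Finset Matrix

namespace Matrix

variable {ι κ R : Type*} [Fintype ι] [DecidableEq κ]

/-- The BCM matrix `Y` of the cluster assignment `c`. -/
def assignment [Zero R] [One R] (c : ι → κ) : Matrix ι κ R :=
  of fun i t => if c i = t then 1 else 0

lemma sum_assignment_apply [AddCommMonoidWithOne R] (c : ι → κ) (t : κ) :
    ∑ i, assignment (R := R) c i t = #{i | c i = t} :=
  sum_boole _ _

lemma assignment_transpose_mul_mul_apply [NonAssocSemiring R] (c : ι → κ) (S : Matrix ι ι R)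
    (t u : κ) :
    ((assignment c : Matrix ι κ R)ᵀ * S * (assignment c : Matrix ι κ R)) t u =
      ∑ i ∈ {i | c i = t}, ∑ j ∈ {j | c j = u}, S i j := by
  simp only [mul_apply, transpose_apply, assignment, of_apply, ite_mul, one_mul, zero_mul,
    mul_ite, mul_one, mul_zero, ← sum_filter]
  exact sum_comm

lemma trace_transpose_mul_mul_of_mul_diagonal [Fintype κ] [CommSemiring R] (A : Matrix ι κ R)
    (S : Matrix ι ι R) (d : κ → R) :
    ((A * diagonal d)ᵀ * S * (A * diagonal d)).trace = ∑ t, d t ^ 2 * (Aᵀ * S * A) t t := by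
  have : (A * diagonal d)ᵀ * S * (A * diagonal d) = diagonal d * (Aᵀ * S * A) * diagonal d := by
    simp only [transpose_mul, diagonal_transpose, Matrix.mul_assoc]
  rw [this, trace]
  refine sum_congr rfl fun t _ => ?_
  simp only [diag, mul_diagonal, diagonal_mul]
  ring

end Matrix

lemma Finset.sum_compl_eq_sub_of_sum_eq {ι M : Type*} [Fintype ι] [DecidableEq ι]
    [AddCommGroup M] {f : ι → M} {a : M} (hf : ∑ j, f j = a) (s : Finset ι) :
    ∑ j ∈ sᶜ, f j = a - ∑ j ∈ s, f j := by
  rw [← hf, ← sum_compl_add_sum s, add_sub_cancel_right]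

lemma Matrix.inv_card_mul_sum_sum_compl_of_sum_row_eq_one {ι : Type*} [Fintype ι] [DecidableEq ι]
    {S : Matrix ι ι ℝ} (hS : ∀ i, ∑ j, S i j = 1) {s : Finset ι} (hs : s.Nonempty) :
    (#s : ℝ)⁻¹ * ∑ i ∈ s, ∑ j ∈ sᶜ, S i j = 1 - (#s : ℝ)⁻¹ * ∑ i ∈ s, ∑ j ∈ s, S i j := by
  have hs' : (#s : ℝ) ≠ 0 := by exact_mod_cast hs.card_pos.ne'
  simp only [sum_compl_eq_sub_of_sum_eq (hS _), sum_sub_distrib, sum_const, nsmul_one]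
  field_simp

theorem stmt6_general {n k : ℕ} (hn : 0 < n) (S : Matrix (Fin n) (Fin n) ℝ)
    (hS1 : ∀ i, ∑ j, S i j = 1)
    (c : Fin n → Fin k) (hc : Function.Surjective c)
    (Y : Matrix (Fin n) (Fin k) ℝ)
    (hY : ∀ i j, Y i j = if c i = j then 1 else 0)
    (Yhat : Matrix (Fin n) (Fin k) ℝ)
    (hYhat : Yhat = Y * Matrix.diagonal fun j => (Real.sqrt (∑ i, Y i j))⁻¹) :
    (k : ℝ)⁻¹ * ∑ t : Fin k,
        ((Finset.univ.filter fun i => c i = t).card : ℝ)⁻¹ *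
          ∑ i ∈ Finset.univ.filter fun i => c i = t,
            ∑ j ∈ Finset.univ.filter fun j => c j ≠ t, S i j
      = 1 - (k : ℝ)⁻¹ * (Yhatᵀ * S * Yhat).trace := by
  have hk : (k : ℝ) ≠ 0 := by exact_mod_cast (c ⟨0, hn⟩).pos.ne'
  obtain rfl : Y = assignment c := ext hY
  have htrace : (Yhatᵀ * S * Yhat).trace =
      ∑ t, (#{i | c i = t} : ℝ)⁻¹ * ∑ i ∈ {i | c i = t}, ∑ j ∈ {j | c j = t}, S i j := by
    simp only [hYhat, trace_transpose_mul_mul_of_mul_diagonal, sum_assignment_apply,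
      assignment_transpose_mul_mul_apply, inv_pow, Real.sq_sqrt (Nat.cast_nonneg _)]
  have hcluster (t : Fin k) :
      (#{i | c i = t} : ℝ)⁻¹ * ∑ i ∈ {i | c i = t}, ∑ j ∈ {j | c j ≠ t}, S i j =
        1 - (#{i | c i = t} : ℝ)⁻¹ * ∑ i ∈ {i | c i = t}, ∑ j ∈ {j | c j = t}, S i j := by
    obtain ⟨i, hi⟩ := hc t
    simpa only [compl_filter] using
      inv_card_mul_sum_sum_compl_of_sum_row_eq_one hS1 (s := {i | c i = t}) ⟨i, by simp [hi]⟩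
  rw [htrace, sum_congr rfl fun t _ => hcluster t, sum_sub_distrib, sum_const, card_univ,
    Fintype.card_fin, nsmul_one, mul_sub, inv_mul_cancel₀ hk]

/-- For row-stochastic `S` and a partition of `{1,…,n}` into `k` nonempty clusters
(given by the surjective cluster assignment `c`), the multi-hop conductance equals
`1 − (1/k)·trace(Ŷᵀ S Ŷ)`. -/
theorem stmt6 {n k : ℕ} (hn : 0 < n) (S : Matrix (Fin n) (Fin n) ℝ)
    (hS0 : ∀ i j, 0 ≤ S i j) (hS1 : ∀ i, ∑ j, S i j = 1)
    (c : Fin n → Fin k) (hc : Function.Surjective c)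
    (Y : Matrix (Fin n) (Fin k) ℝ)
    (hY : ∀ i j, Y i j = if c i = j then 1 else 0)
    (Yhat : Matrix (Fin n) (Fin k) ℝ)
    (hYhat : Yhat = Y * Matrix.diagonal fun j => (Real.sqrt (∑ i, Y i j))⁻¹) :
    (k : ℝ)⁻¹ * ∑ t : Fin k,
        ((Finset.univ.filter fun i => c i = t).card : ℝ)⁻¹ *
          ∑ i ∈ Finset.univ.filter fun i => c i = t,
            ∑ j ∈ Finset.univ.filter fun j => c j ≠ t, S i j
      = 1 - (k : ℝ)⁻¹ * (Yhatᵀ * S * Yhat).trace :=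
  stmt6_general hn S hS1 c hc Y hY Yhat hYhat
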